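/- arXiv:2206.01032 — 5 statements merged into one kernel-verified Lean document; each statement's English description precedes it below -/
import Mathlib

section
/- (Only-if direction of the equivalence theorem.) Let (S, τ) be a sequential abstract-state system over a language L with only function symbols (so S is a nonempty set of states, τ : S → S preserves carriers, S is closed under isomorphism, and every isomorphism between states in S is also an isomorphism between their τ-images). If a finite set T of closed L-terms is a new bounded-exploration witness for (S, τ), then T is also an original bounded-exploration witness for (S, τ): whenever states X, Y ∈ S coincide over T, then Δ(X) = Δ(Y). -/
/-- A first-order language with only function symbols:
`Func n` is the set of `n`-ary function symbols. -/
structure Lang where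
  Func : ℕ → Type

/-- Closed terms of the language `L`. -/
inductive CTerm (L : Lang) : Type
  | app : ∀ {n : ℕ}, L.Func n → (Fin n → CTerm L) → CTerm L

/-- `CTerm.Subterm s t` means `s` is a subterm of `t`. -/
inductive CTerm.Subterm {L : Lang} : CTerm L → CTerm L → Prop
  | refl (t : CTerm L) : CTerm.Subterm t t
  | app {n : ℕ} (f : L.Func n) (ts : Fin n → CTerm L) (i : Fin n) {s : CTerm L} :
      CTerm.Subterm s (ts i) → CTerm.Subterm s (CTerm.app f ts)

/-- A set of closed terms is closed under subterms. -/
def SubtermClosed {L : Lang} (T : Set (CTerm L)) : Prop :=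
  ∀ s t : CTerm L, CTerm.Subterm s t → t ∈ T → s ∈ T

/-- A state: an `L`-structure whose carrier is a subset of `U`.
Function symbols are interpreted as operations mapping carrier elements
to carrier elements. -/
structure State (L : Lang) (U : Type*) where
  carrier : Set U
  interp : ∀ {n : ℕ}, L.Func n → (Fin n → U) → U
  interp_mem : ∀ {n : ℕ} (f : L.Func n) (x : Fin n → U),
    (∀ i, x i ∈ carrier) → interp f x ∈ carrier

/-- The value `V_X(t)` of a closed term `t` in the state `X`. -/
def State.val {L : Lang} {U : Type*} (X : State L U) : CTerm L → U
  | .app f ts => X.interp f (fun i => X.val (ts i))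

/-- `ξ` is an isomorphism from state `X` onto state `Y`. -/
def IsIso {L : Lang} {U : Type*} (ξ : U → U) (X Y : State L U) : Prop :=
  Set.BijOn ξ X.carrier Y.carrier ∧
  ∀ {n : ℕ} (f : L.Func n) (x : Fin n → U), (∀ i, x i ∈ X.carrier) →
    ξ (X.interp f x) = Y.interp f (fun i => ξ (x i))

/-- A sequential abstract-state system `(S, τ)`. -/
structure ASM (L : Lang) (U : Type*) where
  S : Set (State L U)
  nonempty : S.Nonempty
  τ : State L U → State L U
  mapsTo : ∀ X ∈ S, τ X ∈ S
  carrier_τ : ∀ X ∈ S, (τ X).carrier = X.carrier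
  closedIso : ∀ X ∈ S, ∀ (Y : State L U) (ξ : U → U), IsIso ξ X Y → Y ∈ S
  isoτ : ∀ X ∈ S, ∀ Y ∈ S, ∀ ξ : U → U, IsIso ξ X Y → IsIso ξ (τ X) (τ Y)

/-- An update `(f, (x_1, …, x_j), x_0)`. -/
structure Update (L : Lang) (U : Type*) where
  arity : ℕ
  f : L.Func arity
  args : Fin arity → U
  val : U

/-- `u` is an update of the state `X` (in the system `A`): all its components are
in the carrier of `X` and the interpretation of `u.f` in `τ(X)` maps `u.args` to `u.val`. -/
def IsUpd {L : Lang} {U : Type*} (A : ASM L U) (X : State L U) (u : Update L U) : Prop :=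
  (∀ i, u.args i ∈ X.carrier) ∧ u.val ∈ X.carrier ∧ (A.τ X).interp u.f u.args = u.val

/-- `Δ A X` : the set of nontrivial updates of `X`. -/
def Δ {L : Lang} {U : Type*} (A : ASM L U) (X : State L U) : Set (Update L U) :=
  {u | IsUpd A X u ∧ X.interp u.f u.args ≠ u.val}

/-- States `X` and `Y` coincide over the set `T` of closed terms. -/
def Coincide {L : Lang} {U : Type*} (T : Set (CTerm L)) (X Y : State L U) : Prop :=
  ∀ t ∈ T, X.val t = Y.val t

/-- States `X` and `Y` are `T`-similar. -/
def TSimilar {L : Lang} {U : Type*} (T : Set (CTerm L)) (X Y : State L U) : Prop :=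
  ∀ s ∈ T, ∀ t ∈ T, (X.val s = X.val t ↔ Y.val s = Y.val t)

/-- `σ` is (an extension of) the similarity function from `V_X(T)` to `V_Y(T)`:
`σ(V_X(t)) = V_Y(t)` for all `t ∈ T`. -/
def SimFun {L : Lang} {U : Type*} (T : Set (CTerm L)) (X Y : State L U) (σ : U → U) : Prop :=
  ∀ t ∈ T, σ (X.val t) = Y.val t

/-- An element `x` of `X` is `T`-accessible. -/
def AccElem {L : Lang} {U : Type*} (T : Set (CTerm L)) (X : State L U) (x : U) : Prop :=
  ∃ t ∈ T, X.val t = x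

/-- An update is `T`-accessible if all its element components are `T`-accessible. -/
def AccUpd {L : Lang} {U : Type*} (T : Set (CTerm L)) (X : State L U) (u : Update L U) : Prop :=
  AccElem T X u.val ∧ ∀ i, AccElem T X (u.args i)

/-- A set of updates of `X` is `T`-accessible. -/
def AccSet {L : Lang} {U : Type*} (T : Set (CTerm L)) (X : State L U)
    (D : Set (Update L U)) : Prop :=
  ∀ u ∈ D, AccUpd T X u

/-- The action of a function `σ` on an update:
`σ(f, (x_1, …, x_j), x_0) = (f, (σx_1, …, σx_j), σx_0)`. -/
def Update.map {L : Lang} {U : Type*} (σ : U → U) (u : Update L U) : Update L U :=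
  ⟨u.arity, u.f, fun i => σ (u.args i), σ u.val⟩

/-- `T` is an original bounded-exploration witness for `A`. -/
def OrigWitness {L : Lang} {U : Type*} (A : ASM L U) (T : Set (CTerm L)) : Prop :=
  ∀ X ∈ A.S, ∀ Y ∈ A.S, Coincide T X Y → Δ A X = Δ A Y

/-- `T` is a new bounded-exploration witness for `A`. -/
def NewWitness {L : Lang} {U : Type*} (A : ASM L U) (T : Set (CTerm L)) : Prop :=
  SubtermClosed T ∧
  (∀ X ∈ A.S, AccSet T X (Δ A X)) ∧
  (∀ X ∈ A.S, ∀ Y ∈ A.S, TSimilar T X Y → ∀ σ : U → U, SimFun T X Y σ →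
    ∀ u : Update L U, IsUpd A X u → AccUpd T X u →
      (u ∈ Δ A X ↔ Update.map σ u ∈ Δ A Y))

/-! Coinciding over `T` makes two states `T`-similar with the identity as similarity function,
which fixes every update; the new-witness condition then transports each nontrivial update of
one state to the other. -/

section

variable {L : Lang} {U : Type*} {T : Set (CTerm L)} {X Y : State L U}

theorem Coincide.symm (h : Coincide T X Y) : Coincide T Y X :=
  fun t ht => (h t ht).symm

theorem Coincide.tSimilar (h : Coincide T X Y) : TSimilar T X Y :=
  fun s hs t ht => by rw [h s hs, h t ht]

theorem Coincide.simFun_id (h : Coincide T X Y) : SimFun T X Y id := h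

@[simp]
theorem Update.map_id (u : Update L U) : u.map id = u := rfl

theorem NewWitness.Δ_subset_of_coincide {A : ASM L U} (hnew : NewWitness A T)
    (hX : X ∈ A.S) (hY : Y ∈ A.S) (h : Coincide T X Y) : Δ A X ⊆ Δ A Y := by
  obtain ⟨-, hacc, htransport⟩ := hnew
  intro u hu
  simpa using (htransport X hX Y hY h.tSimilar id h.simFun_id u hu.1 (hacc X hX u hu)).mp hu

end

theorem new_witness_implies_orig_witness_general
    {L : Lang} {U : Type*} (A : ASM L U) (T : Set (CTerm L))
    (hnew : NewWitness A T) : OrigWitness A T :=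
  fun _ hX _ hY h =>
    (hnew.Δ_subset_of_coincide hX hY h).antisymm (hnew.Δ_subset_of_coincide hY hX h.symm)

/-- only-if direction: for a sequential abstract-state system,
every finite new bounded-exploration witness is also an original
bounded-exploration witness. -/
theorem new_witness_implies_orig_witness
    {L : Lang} {U : Type*} (A : ASM L U) (T : Set (CTerm L)) (hfin : T.Finite)
    (hnew : NewWitness A T) : OrigWitness A T :=
  new_witness_implies_orig_witness_general A T hnew
end

section
/- (If direction of the equivalence theorem.) Let (S, τ) be a sequential abstract-state system over a language L with only function symbols, and assume additionally that for every state X ∈ S and every finite subset F of U there is an isomorphism from X onto some state X' ∈ S whose carrier is disjoint from F. Let T be a finite set of closed L-terms, closed under subterms, that is an original bounded-exploration witness and such that Δ(X) is T-accessible for every X ∈ S. Then T is a new bounded-exploration witness: for all T-similar states X, Y ∈ S with similarity function σ, and every T-accessible update u of X, u ∈ Δ(X) ⟺ σ(u) ∈ Δ(Y). -/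
/-!
Given `T`-similar states `X` and `Y`, first replace `Y` by an isomorphic copy `Y'` whose carrier
avoids the finitely many elements `V_X(T)`. The map sending `V_{Y'}(t)` to `V_X(t)` for `t ∈ T`
and fixing everything else is then injective on the carrier of `Y'`, so transporting `Y'` along
it gives a state `Z ≅ Y` that coincides with `X` over `T`. Hence `Δ(X) = Δ(Z)`, and since the
isomorphism `Y → Z` inverts `σ` on `T`-accessible elements, `Δ(Z)` corresponds to `Δ(Y)`
under `σ`.
-/

section

variable {L : Lang} {U : Type*}

theorem Function.injOn_extend_id {α β : Type*} {f g : α → β} {s : Set β}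
    (hfg : ∀ a b, f a = f b ↔ g a = g b) (hs : Disjoint s (Set.range g)) :
    Set.InjOn (Function.extend f g id) s := by
  have hfac : Function.FactorsThrough g f := fun a b h => (hfg a b).1 h
  have hout : ∀ b ∈ s, ∀ a, g a ≠ b := fun b hb a hab =>
    Set.disjoint_left.1 hs hb ⟨a, hab⟩
  intro b hb b' hb' h
  by_cases hr : ∃ a, f a = b <;> by_cases hr' : ∃ a, f a = b'
  · obtain ⟨a, rfl⟩ := hr
    obtain ⟨a', rfl⟩ := hr'
    rw [hfac.extend_apply, hfac.extend_apply] at h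
    exact (hfg a a').2 h
  · obtain ⟨a, rfl⟩ := hr
    rw [hfac.extend_apply, Function.extend_apply' _ _ _ hr'] at h
    exact absurd h (hout b' hb' a)
  · obtain ⟨a', rfl⟩ := hr'
    rw [hfac.extend_apply, Function.extend_apply' _ _ _ hr] at h
    exact absurd h.symm (hout b hb a')
  · rwa [Function.extend_apply' _ _ _ hr, Function.extend_apply' _ _ _ hr'] at h

theorem State.val_mem (X : State L U) (t : CTerm L) : X.val t ∈ X.carrier := by
  induction t with
  | app f ts ih => exact X.interp_mem f _ ih

theorem State.exists_isIso_of_injOn [Nonempty U] (Y : State L U) {ζ : U → U}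
    (hζ : Set.InjOn ζ Y.carrier) : ∃ Z : State L U, IsIso ζ Y Z := by
  let ζinv := Function.invFunOn ζ Y.carrier
  refine ⟨⟨ζ '' Y.carrier, fun f x => ζ (Y.interp f fun i => ζinv (x i)), fun f x hx =>
    Set.mem_image_of_mem ζ (Y.interp_mem f _ fun i => Function.invFunOn_mem (hx i))⟩,
    hζ.bijOn_image, fun f x hx => ?_⟩
  change ζ (Y.interp f x) = ζ (Y.interp f fun i => ζinv (ζ (x i)))
  rw [funext fun i => hζ.leftInvOn_invFunOn (hx i)]

namespace IsIso

variable {ξ ζ : U → U} {X Y Z : State L U}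

theorem val_eq (h : IsIso ξ X Y) (t : CTerm L) : ξ (X.val t) = Y.val t := by
  induction t with
  | app f ts ih =>
    change ξ (X.interp f fun i => X.val (ts i)) = Y.interp f fun i => Y.val (ts i)
    rw [h.2 f _ fun i => X.val_mem (ts i)]
    simp only [ih]

theorem val_eq_val_iff (h : IsIso ξ X Y) (s t : CTerm L) :
    Y.val s = Y.val t ↔ X.val s = X.val t := by
  rw [← h.val_eq, ← h.val_eq, h.1.injOn.eq_iff (X.val_mem s) (X.val_mem t)]

theorem comp (hξ : IsIso ξ X Y) (hζ : IsIso ζ Y Z) : IsIso (ζ ∘ ξ) X Z :=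
  ⟨hζ.1.comp hξ.1, fun f x hx => by
    simp only [Function.comp_apply, hξ.2 f x hx, hζ.2 f _ fun i => hξ.1.mapsTo (hx i)]⟩

theorem interp_eq_iff (h : IsIso ξ X Y) {n : ℕ} (f : L.Func n) {x : Fin n → U}
    (hx : ∀ i, x i ∈ X.carrier) {v : U} (hv : v ∈ X.carrier) :
    Y.interp f (fun i => ξ (x i)) = ξ v ↔ X.interp f x = v := by
  rw [← h.2 f x hx, h.1.injOn.eq_iff (X.interp_mem f x hx) hv]

end IsIso

theorem Update.map_mem_Δ_iff (A : ASM L U) {X Y : State L U} (hX : X ∈ A.S) (hY : Y ∈ A.S)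
    {η : U → U} (hη : IsIso η X Y) {u : Update L U} (hargs : ∀ i, u.args i ∈ X.carrier)
    (hval : u.val ∈ X.carrier) : u.map η ∈ Δ A Y ↔ u ∈ Δ A X := by
  have hτ := A.isoτ X hX Y hY η hη
  have hcτ := A.carrier_τ X hX
  simp only [Δ, IsUpd, Set.mem_ofPred_eq, Update.map, ne_eq]
  rw [hτ.interp_eq_iff u.f (hcτ ▸ hargs) (hcτ ▸ hval), hη.interp_eq_iff u.f hargs hval]
  simp [hargs, hval, hη.1.mapsTo hval, fun i => hη.1.mapsTo (hargs i)]

theorem exists_isIso_val_eq_of_tSimilar [Nonempty U] (A : ASM L U)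
    (hfresh : ∀ X ∈ A.S, ∀ F : Set U, F.Finite →
      ∃ X' ∈ A.S, (∃ ξ : U → U, IsIso ξ X X') ∧ Disjoint X'.carrier F)
    {T : Set (CTerm L)} (hfin : T.Finite) {X Y : State L U} (hY : Y ∈ A.S)
    (hsim : TSimilar T X Y) :
    ∃ Z ∈ A.S, ∃ η : U → U, IsIso η Y Z ∧ ∀ t ∈ T, η (Y.val t) = X.val t := by
  obtain ⟨Y', hY', ⟨ξ, hξ⟩, hdisj⟩ := hfresh Y hY (X.val '' T) (hfin.image _)
  let ζ := Function.extend (fun t : T => Y'.val t) (fun t : T => X.val t) id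
  have hsim' : ∀ s t : T, Y'.val s = Y'.val t ↔ X.val s = X.val t := fun s t =>
    (hξ.val_eq_val_iff s t).trans (hsim s s.2 t t.2).symm
  have hinj : Set.InjOn ζ Y'.carrier :=
    Function.injOn_extend_id hsim' (by rwa [← Set.image_eq_range])
  obtain ⟨Z, hζ⟩ := Y'.exists_isIso_of_injOn hinj
  refine ⟨Z, A.closedIso Y' hY' Z ζ hζ, ζ ∘ ξ, hξ.comp hζ, fun t ht => ?_⟩
  rw [Function.comp_apply, hξ.val_eq]
  exact Function.FactorsThrough.extend_apply (fun s t => (hsim' s t).1) id ⟨t, ht⟩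

end

/-- if direction: assume that every state has an isomorphic copy in `S`
whose carrier avoids any given finite subset of `U`.  If `T` is a finite,
subterm-closed, original bounded-exploration witness such that `Δ(X)` is
`T`-accessible for every state `X`, then `T` is a new bounded-exploration witness. -/
theorem orig_witness_implies_new_witness
    {L : Lang} {U : Type*} (A : ASM L U)
    (hfresh : ∀ X ∈ A.S, ∀ F : Set U, F.Finite →
      ∃ X' ∈ A.S, (∃ ξ : U → U, IsIso ξ X X') ∧ Disjoint X'.carrier F)
    (T : Set (CTerm L)) (hfin : T.Finite) (hsub : SubtermClosed T)
    (horig : OrigWitness A T)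
    (hacc : ∀ X ∈ A.S, AccSet T X (Δ A X)) :
    NewWitness A T := by
  refine ⟨hsub, hacc, fun X hX Y hY hsim σ hσ u _ ⟨hval, hargs⟩ => ?_⟩
  have : Nonempty U := ⟨u.val⟩
  obtain ⟨Z, hZ, η, hη, hηX⟩ := exists_isIso_val_eq_of_tSimilar A hfresh hfin hY hsim
  have hcoinc : Coincide T X Z := fun t ht => by rw [← hη.val_eq, hηX t ht]
  have hmemY : ∀ {x}, AccElem T X x → σ x ∈ Y.carrier := by
    rintro _ ⟨t, ht, rfl⟩
    exact hσ t ht ▸ Y.val_mem t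
  have hinv : ∀ {x}, AccElem T X x → η (σ x) = x := by
    rintro _ ⟨t, ht, rfl⟩
    rw [hσ t ht, hηX t ht]
  have hu : (u.map σ).map η = u := by
    cases u
    simp only [Update.map, hinv hval, hinv (hargs _)]
  rw [horig X hX Z hZ hcoinc,
    ← Update.map_mem_Δ_iff A hY hZ hη (u := u.map σ) (fun i => hmemY (hargs i)) (hmemY hval), hu]
end

section
/- If T ⊆ T' are sets of closed L-terms, both closed under subterms, and T is a new bounded-exploration witness for a sequential abstract-state system (S, τ), then T' is also a new bounded-exploration witness: Δ(X) is T'-accessible for every X ∈ S, and for all T'-similar states X, Y ∈ S with similarity function σ' : V_X(T') → V_Y(T') and every T'-accessible update u of X, u ∈ Δ(X) ⟺ σ'(u) ∈ Δ(Y). -/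
/-! Enlarging `T` to `T'` only weakens the similarity hypotheses, so the witness property of `T`
applies as soon as the update is `T`-accessible in `X`. For `u ∈ Δ X` this is given; for
`σ u ∈ Δ Y` the update `σ u` is `T`-accessible in `Y`, and `T'`-similarity pulls each equation
`V_Y(t) = σ(V_X(s))` back to `V_X(t) = V_X(s)`. -/

section

variable {L : Lang} {U : Type*} {T T' : Set (CTerm L)} {X Y : State L U} {σ : U → U}

theorem AccElem.mono (h : T ⊆ T') {x : U} (hx : AccElem T X x) : AccElem T' X x :=
  let ⟨t, ht, hv⟩ := hx
  ⟨t, h ht, hv⟩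

theorem AccUpd.mono (h : T ⊆ T') {u : Update L U} (hu : AccUpd T X u) : AccUpd T' X u :=
  ⟨hu.1.mono h, fun i => (hu.2 i).mono h⟩

theorem TSimilar.mono (h : T ⊆ T') (hXY : TSimilar T' X Y) : TSimilar T X Y :=
  fun s hs t ht => hXY s (h hs) t (h ht)

theorem SimFun.mono (h : T ⊆ T') (hσ : SimFun T' X Y σ) : SimFun T X Y σ :=
  fun t ht => hσ t (h ht)

theorem AccElem.of_simFun (h : T ⊆ T') (hXY : TSimilar T' X Y) (hσ : SimFun T' X Y σ)
    {x : U} (hx : AccElem T' X x) (hσx : AccElem T Y (σ x)) : AccElem T X x := by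
  obtain ⟨s, hs, rfl⟩ := hx
  obtain ⟨t, ht, htv⟩ := hσx
  rw [hσ s hs] at htv
  exact ⟨t, ht, (hXY t (h ht) s hs).mpr htv⟩

theorem AccUpd.of_map (h : T ⊆ T') (hXY : TSimilar T' X Y) (hσ : SimFun T' X Y σ)
    {u : Update L U} (hu : AccUpd T' X u) (hσu : AccUpd T Y (u.map σ)) : AccUpd T X u :=
  ⟨.of_simFun h hXY hσ hu.1 hσu.1, fun i => .of_simFun h hXY hσ (hu.2 i) (hσu.2 i)⟩

end

/-- if `T ⊆ T'` are both closed under subterms and `T` is a new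
bounded-exploration witness, then so is `T'`. -/
theorem new_witness_mono
    {L : Lang} {U : Type*} (A : ASM L U) (T T' : Set (CTerm L)) (hTT' : T ⊆ T')
    (hT'sub : SubtermClosed T')
    (hT : NewWitness A T) : NewWitness A T' := by
  obtain ⟨-, hacc, hsim⟩ := hT
  refine ⟨hT'sub, fun X hX u hu => (hacc X hX u hu).mono hTT', ?_⟩
  intro X hX Y hY hXY σ hσ u hu haccu
  have hsimT := hsim X hX Y hY (hXY.mono hTT') σ (hσ.mono hTT') u hu
  constructor
  · intro hΔ
    exact (hsimT (hacc X hX u hΔ)).mp hΔ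
  · intro hΔ
    exact (hsimT (.of_map hTT' hXY hσ haccu (hacc Y hY _ hΔ))).mpr hΔ
end

section
/- (Case 1 of the if-direction proof.) Let (S, τ) be a sequential abstract-state system over a language L with only function symbols, closed under isomorphism in the following strong sense: for every X ∈ S and every bijection from the carrier of X onto a subset of U, the pushed-forward structure belongs to S. Let T be a finite set of closed L-terms, closed under subterms, that is an original bounded-exploration witness. Suppose X, Y ∈ S are T-similar, V_X(T) ∩ V_Y(T) = ∅, σ is the similarity function, the closed terms t_0 and f(t_1, …, t_j) belong to T, x_i = V_X(t_i) and y_i = V_Y(t_i) for i = 0, 1, …, j. If (f, (x_1, …, x_j), x_0) ∈ Δ(X), then (f, (y_1, …, y_j), y_0) ∈ Δ(Y). -/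
/-!
Since `X` and `Y` are `T`-similar and `V_X(T)`, `V_Y(T)` are disjoint, there is an involution `ζ`
of `U` exchanging `V_Y(t)` and `V_X(t)` for every `t ∈ T`. Pushing `Y` forward along `ζ` gives a
state `Z ∈ S` isomorphic to `Y` that coincides with `X` on `T`, so `Δ(Z) = Δ(X)` by the witness
property. The isomorphism `ζ : Y ≅ Z` carries `Δ(Y)` onto `Δ(Z)` and sends
`(f, (y_1, …, y_j), y_0)` to `(f, (x_1, …, x_j), x_0)`.
-/

theorem State.val_mem_carrier {L : Lang} {U : Type*} (X : State L U) :
    ∀ t : CTerm L, X.val t ∈ X.carrier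
  | .app f ts => X.interp_mem f _ fun i => X.val_mem_carrier (ts i)

theorem IsIso.val_eq_s9 {L : Lang} {U : Type*} {ξ : U → U} {X Z : State L U}
    (h : IsIso ξ X Z) : ∀ t : CTerm L, ξ (X.val t) = Z.val t
  | .app f ts => by
    show ξ (X.interp f fun i => X.val (ts i)) = Z.interp f fun i => Z.val (ts i)
    rw [h.2 f _ fun i => X.val_mem_carrier (ts i)]
    exact congrArg _ (funext fun i => h.val_eq_s9 (ts i))

theorem mem_Δ_iff_map_mem_of_isIso {L : Lang} {U : Type*} (A : ASM L U) {Y Z : State L U}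
    (hY : Y ∈ A.S) (hZ : Z ∈ A.S) {ζ : U → U} (hiso : IsIso ζ Y Z) (u : Update L U)
    (hargs : ∀ i, u.args i ∈ Y.carrier) (hval : u.val ∈ Y.carrier) :
    u ∈ Δ A Y ↔ u.map ζ ∈ Δ A Z := by
  have hinj : Set.InjOn ζ Y.carrier := hiso.1.injOn
  have hτargs : ∀ i, u.args i ∈ (A.τ Y).carrier := by rwa [A.carrier_τ Y hY]
  have hτmem : (A.τ Y).interp u.f u.args ∈ Y.carrier := by
    rw [← A.carrier_τ Y hY]; exact (A.τ Y).interp_mem u.f u.args hτargs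
  have hτ : ζ ((A.τ Y).interp u.f u.args) = (A.τ Z).interp u.f (fun i => ζ (u.args i)) :=
    (A.isoτ Y hY Z hZ ζ hiso).2 u.f u.args hτargs
  have hinterp : ζ (Y.interp u.f u.args) = Z.interp u.f (fun i => ζ (u.args i)) :=
    hiso.2 u.f u.args hargs
  simp only [Δ, IsUpd, Update.map, Set.mem_ofPred_eq, ne_eq, ← hτ, ← hinterp,
    hinj.eq_iff hτmem hval, hinj.eq_iff (Y.interp_mem u.f u.args hargs) hval,
    fun i => hiso.1.mapsTo (hargs i), hiso.1.mapsTo hval, hargs, hval]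

theorem exists_involutive_swap {ι U : Type*} (a b : ι → U)
    (hab : ∀ i k, a i = a k ↔ b i = b k) (hdisj : Disjoint (Set.range a) (Set.range b)) :
    ∃ ζ : U → U, Function.Involutive ζ ∧ ∀ i, ζ (a i) = b i ∧ ζ (b i) = a i := by
  classical
  let ζ : U → U := fun x =>
    if hb : x ∈ Set.range b then a hb.choose
    else if ha : x ∈ Set.range a then b ha.choose
    else x
  have hb : ∀ i, ζ (b i) = a i := fun i => by
    have h : b i ∈ Set.range b := ⟨i, rfl⟩
    simp only [ζ, dif_pos h]
    exact (hab _ _).mpr h.choose_spec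
  have ha : ∀ i, ζ (a i) = b i := fun i => by
    have hnb : a i ∉ Set.range b := Set.disjoint_left.mp hdisj ⟨i, rfl⟩
    have h : a i ∈ Set.range a := ⟨i, rfl⟩
    simp only [ζ, dif_neg hnb, dif_pos h]
    exact (hab _ _).mp h.choose_spec
  refine ⟨ζ, fun x => ?_, fun i => ⟨ha i, hb i⟩⟩
  by_cases hxb : x ∈ Set.range b
  · obtain ⟨i, rfl⟩ := hxb
    rw [hb, ha]
  by_cases hxa : x ∈ Set.range a
  · obtain ⟨i, rfl⟩ := hxa
    rw [ha, hb]
  have hfix : ζ x = x := by simp only [ζ, dif_neg hxb, dif_neg hxa]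
  rw [hfix, hfix]

theorem case_one_disjoint_values_general
    {L : Lang} {U : Type*} (A : ASM L U)
    (hstrong : ∀ X ∈ A.S, ∀ g : U → U, Set.InjOn g X.carrier →
      ∃ X' ∈ A.S, IsIso g X X')
    (T : Set (CTerm L)) (hsub : SubtermClosed T)
    (horig : OrigWitness A T)
    (X Y : State L U) (hX : X ∈ A.S) (hY : Y ∈ A.S)
    (hsim : TSimilar T X Y)
    (hdisj : Disjoint (X.val '' T) (Y.val '' T))
    {j : ℕ} (f : L.Func j) (ts : Fin j → CTerm L) (t0 : CTerm L)
    (ht0 : t0 ∈ T) (htf : CTerm.app f ts ∈ T)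
    (hu : (⟨j, f, fun i => X.val (ts i), X.val t0⟩ : Update L U) ∈ Δ A X) :
    (⟨j, f, fun i => Y.val (ts i), Y.val t0⟩ : Update L U) ∈ Δ A Y := by
  rw [Set.image_eq_range, Set.image_eq_range] at hdisj
  obtain ⟨ζ, hζ, hswap⟩ := exists_involutive_swap (fun t : T => X.val t) (fun t : T => Y.val t)
    (fun s t => hsim s s.2 t t.2) hdisj
  have hζY : ∀ t ∈ T, ζ (Y.val t) = X.val t := fun t ht => (hswap ⟨t, ht⟩).2
  obtain ⟨Z, hZ, hiso⟩ := hstrong Y hY ζ hζ.injective.injOn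
  have hXZ : Coincide T X Z := fun t ht => by rw [← hiso.val_eq_s9 t, hζY t ht]
  have hts : ∀ i, ts i ∈ T := fun i => hsub _ _ (.app f ts i (.refl _)) htf
  rw [mem_Δ_iff_map_mem_of_isIso A hY hZ hiso _ (fun i => Y.val_mem_carrier (ts i))
    (Y.val_mem_carrier t0), ← horig X hX Z hZ hXZ]
  simpa only [Update.map, hζY t0 ht0, fun i => hζY (ts i) (hts i)] using hu

/-- Case 1 of the if-direction proof: assume the strong closure
under isomorphism (any pushed-forward copy of a state in `S` along an injection
of its carrier into `U` belongs to `S`).  Let `T` be a finite subterm-closed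
original bounded-exploration witness, let `X, Y ∈ S` be `T`-similar with
`V_X(T) ∩ V_Y(T) = ∅` and similarity function `σ`, and let the closed terms
`t_0` and `f(t_1, …, t_j)` belong to `T`.  If `(f, (x_1, …, x_j), x_0) ∈ Δ(X)`,
then `(f, (y_1, …, y_j), y_0) ∈ Δ(Y)`, where `x_i = V_X(t_i)`, `y_i = V_Y(t_i)`. -/
theorem case_one_disjoint_values
    {L : Lang} {U : Type*} (A : ASM L U)
    (hstrong : ∀ X ∈ A.S, ∀ g : U → U, Set.InjOn g X.carrier →
      ∃ X' ∈ A.S, IsIso g X X')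
    (T : Set (CTerm L)) (hfin : T.Finite) (hsub : SubtermClosed T)
    (horig : OrigWitness A T)
    (X Y : State L U) (hX : X ∈ A.S) (hY : Y ∈ A.S)
    (hsim : TSimilar T X Y)
    (hdisj : Disjoint (X.val '' T) (Y.val '' T))
    (σ : U → U) (hσ : SimFun T X Y σ)
    {j : ℕ} (f : L.Func j) (ts : Fin j → CTerm L) (t0 : CTerm L)
    (ht0 : t0 ∈ T) (htf : CTerm.app f ts ∈ T)
    (hu : (⟨j, f, fun i => X.val (ts i), X.val t0⟩ : Update L U) ∈ Δ A X) :
    (⟨j, f, fun i => Y.val (ts i), Y.val t0⟩ : Update L U) ∈ Δ A Y :=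
  case_one_disjoint_values_general A hstrong T hsub horig X Y hX hY hsim hdisj f ts t0 ht0 htf hu
end

section
/- (Example, failure of the original bounded-exploration postulate.) Let L be the first-order language with a single constant f, let U be a set with at least three elements, and define the sequential abstract-state system A as follows: the states are all pairs X = (D, v) where D ⊆ U has exactly two elements and the interpretation f_X = v ∈ D; τ(D, v) = (D, w) where w is the other element of D. Then A does not satisfy the original bounded-exploration postulate: for every set T of closed L-terms there exist states X and Y with V_X(t) = V_Y(t) for all t ∈ T but Δ(X) ≠ Δ(Y). Concretely, for distinct a, b, c ∈ U, the states X = ({a, b}, a) and Y = ({a, c}, a) coincide over every set of closed L-terms, yet Δ(X) = {(f, b)} ≠ {(f, c)} = Δ(Y). -/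
/-- The language with a single nonlogical symbol: a constant (`0`-ary function symbol) `f`. -/
inductive OneC : ℕ → Type
  | f : OneC 0

/-- That language as a `Lang`. -/
def L1 : Lang := ⟨OneC⟩

theorem State.val_eq_interp_f {U : Type*} (X : State L1 U) (t : CTerm L1) :
    X.val t = X.interp OneC.f ![] := by
  obtain ⟨g, ts⟩ := t
  cases g
  exact congrArg (X.interp OneC.f) (Subsingleton.elim _ _)

theorem Δ_eq_singleton {U : Type*} {A : ASM L1 U} {X : State L1 U} {b : U}
    (hb : b ∈ X.carrier) (hτb : (A.τ X).interp OneC.f ![] = b)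
    (hXb : X.interp OneC.f ![] ≠ b) :
    Δ A X = {(⟨0, OneC.f, ![], b⟩ : Update L1 U)} := by
  ext ⟨n, g, args, v⟩
  cases g
  obtain rfl : args = ![] := Subsingleton.elim _ _
  simp only [Δ, IsUpd, Set.mem_ofPred_eq, Set.mem_singleton_iff,
    IsEmpty.forall_iff, true_and, hτb]
  constructor
  · rintro ⟨⟨-, rfl⟩, -⟩
    rfl
  · intro h
    obtain rfl : v = b := congrArg Update.val h
    exact ⟨⟨hb, rfl⟩, hXb⟩

def pairState {U : Type*} (a b : U) : State L1 U where
  carrier := {a, b}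
  interp _ _ := a
  interp_mem _ _ _ := Set.mem_insert a {b}

/-- Example: failure of the original bounded-exploration postulate:
in the system whose states are the pairs `X = ({a, b}, v)` with `a ≠ b` in `U` and
`v = f_X ∈ {a, b}`, and whose one-step transformation flips the value of `f`,
for every set `T` of closed terms there are states coinciding over `T` with
different update sets.  Concretely, for distinct `a, b, c ∈ U`, the states
`X = ({a, b}, a)` and `Y = ({a, c}, a)` coincide over every set of closed terms,
yet `Δ(X) = {(f, b)} ≠ {(f, c)} = Δ(Y)`. -/
theorem example_orig_postulate_fails
    {U : Type*} (A : ASM L1 U)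
    (hS : A.S = {X : State L1 U | ∃ a b : U, a ≠ b ∧ X.carrier = {a, b}})
    (hτ : ∀ X ∈ A.S, ∀ a b : U, a ≠ b → X.carrier = {a, b} →
      X.interp OneC.f ![] = a → (A.τ X).interp OneC.f ![] = b)
    (a b c : U) (hab : a ≠ b) (hac : a ≠ c) (hbc : b ≠ c) :
    (∀ T : Set (CTerm L1), ∃ X ∈ A.S, ∃ Y ∈ A.S,
      Coincide T X Y ∧ Δ A X ≠ Δ A Y) ∧
    ∀ X ∈ A.S, ∀ Y ∈ A.S,
      X.carrier = {a, b} → X.interp OneC.f ![] = a →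
      Y.carrier = {a, c} → Y.interp OneC.f ![] = a →
      (∀ t : CTerm L1, X.val t = Y.val t) ∧
      Δ A X = {(⟨0, OneC.f, ![], b⟩ : Update L1 U)} ∧
      Δ A Y = {(⟨0, OneC.f, ![], c⟩ : Update L1 U)} ∧
      Δ A X ≠ Δ A Y := by
  have concrete : ∀ X ∈ A.S, ∀ Y ∈ A.S,
      X.carrier = {a, b} → X.interp OneC.f ![] = a →
      Y.carrier = {a, c} → Y.interp OneC.f ![] = a →
      (∀ t : CTerm L1, X.val t = Y.val t) ∧
      Δ A X = {(⟨0, OneC.f, ![], b⟩ : Update L1 U)} ∧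
      Δ A Y = {(⟨0, OneC.f, ![], c⟩ : Update L1 U)} ∧
      Δ A X ≠ Δ A Y := by
    intro X hX Y hY hXc hXa hYc hYa
    have hΔX := Δ_eq_singleton (hXc ▸ Or.inr rfl) (hτ X hX a b hab hXc hXa) (hXa ▸ hab)
    have hΔY := Δ_eq_singleton (hYc ▸ Or.inr rfl) (hτ Y hY a c hac hYc hYa) (hYa ▸ hac)
    refine ⟨fun t => by rw [X.val_eq_interp_f, Y.val_eq_interp_f, hXa, hYa], hΔX, hΔY, ?_⟩
    rw [hΔX, hΔY, Ne, Set.singleton_eq_singleton_iff]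
    exact fun h => hbc (congrArg Update.val h)
  have hX : pairState a b ∈ A.S := hS ▸ ⟨a, b, hab, rfl⟩
  have hY : pairState a c ∈ A.S := hS ▸ ⟨a, c, hac, rfl⟩
  obtain ⟨hval, -, -, hΔ⟩ := concrete _ hX _ hY rfl rfl rfl rfl
  exact ⟨fun _ => ⟨_, hX, _, hY, fun t _ => hval t, hΔ⟩, concrete⟩
end
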